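/- Counterfactual fairness implies demographic parity: if a policy pi assigns the same acceptance probability to every factual individual and its counterfactual with flipped sensitive attribute (CFU(pi) = 0 under an exogenous-noise structural model), then pi satisfies demographic parity (DPU(pi) = 0). -/
import Mathlib


/-- Counterfactual fairness implies demographic parity: in a structural model
`X = g(S, Y, E)` with exogenous `(Y, E)` independent of `S ∈ {-1, 1}`, if
`CFU(π) = 0` then `DPU(π) = 0`. -/
theorem stmt12
    {Yt Et Xt : Type} [Fintype Yt] [Fintype Et]
    (μ : Yt × Et → ℝ) (hμ0 : ∀ w, 0 ≤ μ w) (hμ1 : ∑ w, μ w = 1)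
    (a b : ℝ) (ha : 0 < a) (hb : 0 < b) (hab : a + b = 1)  -- a = P(S=1), b = P(S=-1)
    (g : ℤ → Yt → Et → Xt)
    (π : Xt → ℤ → ℝ) (hπ : ∀ x s, 0 ≤ π x s ∧ π x s ≤ 1)
    -- CFU(π) = 0
    (hCFU : a * (∑ w, μ w * |π (g 1 w.1 w.2) 1 - π (g (-1) w.1 w.2) (-1)|)
        + b * (∑ w, μ w * |π (g (-1) w.1 w.2) (-1) - π (g 1 w.1 w.2) 1|) = 0) :
    |(∑ w, μ w * π (g 1 w.1 w.2) 1) - ∑ w, μ w * π (g (-1) w.1 w.2) (-1)| = 0 := by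
  have hsumnn : ∀ (S : Finset (Yt × Et)),
      0 ≤ ∑ w ∈ S, μ w * |π (g 1 w.1 w.2) 1 - π (g (-1) w.1 w.2) (-1)| := by
    intro S
    exact Finset.sum_nonneg fun w _ => mul_nonneg (hμ0 w) (abs_nonneg _)
  have h2 : 0 ≤ ∑ w, μ w * |π (g (-1) w.1 w.2) (-1) - π (g 1 w.1 w.2) 1| :=
    Finset.sum_nonneg fun w _ => mul_nonneg (hμ0 w) (abs_nonneg _)
  have h1 := hsumnn Finset.univ
  have hz : ∑ w, μ w * |π (g 1 w.1 w.2) 1 - π (g (-1) w.1 w.2) (-1)| = 0 := by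
    have haS : a * (∑ w, μ w * |π (g 1 w.1 w.2) 1 - π (g (-1) w.1 w.2) (-1)|) = 0 := by
      nlinarith [mul_nonneg ha.le h1, mul_nonneg hb.le h2]
    exact (mul_eq_zero.mp haS).resolve_left ha.ne'
  have key : (∑ w, μ w * π (g 1 w.1 w.2) 1) - ∑ w, μ w * π (g (-1) w.1 w.2) (-1)
      = ∑ w, μ w * (π (g 1 w.1 w.2) 1 - π (g (-1) w.1 w.2) (-1)) := by
    rw [← Finset.sum_sub_distrib]
    congr 1; ext w; ring
  rw [key, abs_eq_zero]
  have hle := Finset.abs_sum_le_sum_abs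
    (fun w : Yt × Et => μ w * (π (g 1 w.1 w.2) 1 - π (g (-1) w.1 w.2) (-1))) Finset.univ
  have heq : ∑ w, |μ w * (π (g 1 w.1 w.2) 1 - π (g (-1) w.1 w.2) (-1))|
      = ∑ w, μ w * |π (g 1 w.1 w.2) 1 - π (g (-1) w.1 w.2) (-1)| := by
    apply Finset.sum_congr rfl; intro w _
    rw [abs_mul, abs_of_nonneg (hμ0 w)]
  rw [heq, hz] at hle
  exact abs_eq_zero.mp (le_antisymm hle (abs_nonneg _))
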